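/- Let q ≥ 3 be an integer and θ = 1 − 1/q. The function ω_max on [0,θ] defined by ω_max(δ) = 2θ(1 − √(1 − δ/θ)) for δ ∈ [0, (2q−3)/(q(q−1))] and ω_max(δ) = 1 − (1 − δ/θ)·(q−1)²/(q(q−2)) for δ ∈ [(2q−3)/(q(q−1)), θ] is strictly increasing on [0,θ], continuously differentiable on (0,θ), and convex on [0,θ]. -/

import Mathlib

/-!
The square-root branch `2θ(1 - √(1 - δ/θ))` has derivative `1/√(1 - δ/θ)`, which is positive and
increasing on `[0, θ)`. At the kink `δ₀ = (2q-3)/(q(q-1))` one has `1 - δ₀/θ = ((q-2)/(q-1))²`, so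
both the values and the slopes of the two branches agree there, the slope being that of the linear
branch, `(q-1)/(q-2)`. Hence `ω_max` is differentiable on `(0, θ)` with the continuous, positive,
nondecreasing derivative `min (1/√(1 - δ/θ)) ((q-1)/(q-2))`, and the three claims follow from the
mean value theorem.
-/

open Filter Real Set

/-- The function `ω_max` (with `θ = 1 - 1/q`). -/
noncomputable def omegaMax (q : ℕ) (δ : ℝ) : ℝ :=
  if δ ≤ (2 * (q : ℝ) - 3) / ((q : ℝ) * ((q : ℝ) - 1)) then
    2 * (1 - 1 / (q : ℝ)) * (1 - Real.sqrt (1 - δ / (1 - 1 / (q : ℝ))))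
  else
    1 - (1 - δ / (1 - 1 / (q : ℝ))) * ((q : ℝ) - 1) ^ 2 / ((q : ℝ) * ((q : ℝ) - 2))

lemma hasDerivAt_ite_le {f g : ℝ → ℝ} {s x d : ℝ} (hfg : f s = g s)
    (hf : x ≤ s → HasDerivAt f d x) (hg : s ≤ x → HasDerivAt g d x) :
    HasDerivAt (fun y => if y ≤ s then f y else g y) d x := by
  rcases lt_trichotomy x s with hxs | rfl | hxs
  · refine (hf hxs.le).congr_of_eventuallyEq ?_
    filter_upwards [Iio_mem_nhds hxs] with y hy
    exact if_pos (mem_Iio.mp hy).le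
  · have hleft : HasDerivWithinAt (fun y => if y ≤ x then f y else g y) d (Iic x) x :=
      (hf le_rfl).hasDerivWithinAt.congr (fun y hy => if_pos hy) (if_pos le_rfl)
    have hright : HasDerivWithinAt (fun y => if y ≤ x then f y else g y) d (Ici x) x := by
      refine (hg le_rfl).hasDerivWithinAt.congr (fun y hy => ?_) (by simp [hfg])
      rcases (mem_Ici.mp hy).eq_or_lt with rfl | hlt
      · simp [hfg]
      · simp [not_le.mpr hlt]
    simpa [Iic_union_Ici] using hleft.union hright
  · refine (hg hxs.le).congr_of_eventuallyEq ?_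
    filter_upwards [Ioi_mem_nhds hxs] with y hy
    exact if_neg (not_le.mpr (mem_Ioi.mp hy))

lemma strictMonoOn_contDiffOn_convexOn_of_hasDerivAt {f f' : ℝ → ℝ} {a b : ℝ}
    (hf : ContinuousOn f (Icc a b)) (hderiv : ∀ x ∈ Ioo a b, HasDerivAt f (f' x) x)
    (hpos : ∀ x ∈ Ioo a b, 0 < f' x) (hcont : ContinuousOn f' (Ioo a b))
    (hmono : MonotoneOn f' (Ioo a b)) :
    StrictMonoOn f (Icc a b) ∧ ContDiffOn ℝ 1 f (Ioo a b) ∧ ConvexOn ℝ (Icc a b) f := by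
  have hdiff : DifferentiableOn ℝ f (Ioo a b) :=
    fun x hx => (hderiv x hx).differentiableAt.differentiableWithinAt
  have hderiv_eq : EqOn (deriv f) f' (Ioo a b) := fun x hx => (hderiv x hx).deriv
  refine ⟨?_, ?_, ?_⟩
  · refine strictMonoOn_of_deriv_pos (convex_Icc a b) hf ?_
    rw [interior_Icc]
    exact fun x hx => hderiv_eq hx ▸ hpos x hx
  · rw [contDiffOn_one_iff_derivWithin (uniqueDiffOn_Ioo a b)]
    refine ⟨hdiff, hcont.congr fun x hx => ?_⟩
    exact ((hderiv x hx).hasDerivWithinAt.derivWithin ((uniqueDiffOn_Ioo a b) x hx))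
  · refine MonotoneOn.convexOn_of_deriv (convex_Icc a b) hf (by rwa [interior_Icc]) ?_
    rw [interior_Icc]
    exact hmono.congr hderiv_eq.symm

noncomputable def omegaTheta (Q : ℝ) : ℝ := 1 - 1 / Q

noncomputable def omegaKink (Q : ℝ) : ℝ := (2 * Q - 3) / (Q * (Q - 1))

noncomputable def omegaSqrtBranch (Q δ : ℝ) : ℝ :=
  2 * omegaTheta Q * (1 - √(1 - δ / omegaTheta Q))

noncomputable def omegaLinearBranch (Q δ : ℝ) : ℝ :=
  1 - (1 - δ / omegaTheta Q) * (Q - 1) ^ 2 / (Q * (Q - 2))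

noncomputable def omegaMaxReal (Q δ : ℝ) : ℝ :=
  if δ ≤ omegaKink Q then omegaSqrtBranch Q δ else omegaLinearBranch Q δ

lemma omegaMax_eq_omegaMaxReal (q : ℕ) : omegaMax q = omegaMaxReal q := rfl

noncomputable def omegaMaxDeriv (Q δ : ℝ) : ℝ :=
  min (√(1 - δ / omegaTheta Q))⁻¹ ((Q - 1) / (Q - 2))

lemma hasDerivAt_one_sub_div (c x : ℝ) : HasDerivAt (fun y => 1 - y / c) (-(1 / c)) x := by
  simpa using ((hasDerivAt_id x).div_const c).const_sub 1

section

variable {Q : ℝ}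

lemma omegaTheta_pos (hQ : 1 < Q) : 0 < omegaTheta Q := by
  rw [omegaTheta, sub_pos, div_lt_one (by linarith)]
  exact hQ

lemma omegaKink_lt_omegaTheta (hQ : 2 < Q) : omegaKink Q < omegaTheta Q := by
  have hden : 0 < Q * (Q - 1) := by nlinarith
  rw [omegaKink, div_lt_iff₀ hden,
    show omegaTheta Q * (Q * (Q - 1)) = (Q - 1) ^ 2 by unfold omegaTheta; field_simp]
  nlinarith

lemma one_sub_omegaKink_div_omegaTheta (hQ : 1 < Q) :
    1 - omegaKink Q / omegaTheta Q = ((Q - 2) / (Q - 1)) ^ 2 := by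
  have h0 : Q ≠ 0 := by positivity
  have h1 : Q - 1 ≠ 0 := by linarith
  unfold omegaKink omegaTheta
  field_simp
  ring

lemma sqrt_one_sub_omegaKink_div_omegaTheta (hQ : 2 < Q) :
    √(1 - omegaKink Q / omegaTheta Q) = (Q - 2) / (Q - 1) := by
  rw [one_sub_omegaKink_div_omegaTheta (by linarith)]
  exact Real.sqrt_sq (div_nonneg (by linarith) (by linarith))

lemma one_sub_div_omegaTheta_pos (hQ : 1 < Q) {δ : ℝ} (hδ : δ < omegaTheta Q) :
    0 < 1 - δ / omegaTheta Q := by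
  rw [sub_pos, div_lt_one (omegaTheta_pos hQ)]
  exact hδ

lemma antitone_sqrt_one_sub_div_omegaTheta (hQ : 1 < Q) :
    Antitone fun δ => √(1 - δ / omegaTheta Q) := by
  have := omegaTheta_pos hQ
  intro δ δ' h
  dsimp only
  gcongr

lemma hasDerivAt_omegaSqrtBranch (hQ : 1 < Q) {δ : ℝ} (hδ : δ < omegaTheta Q) :
    HasDerivAt (omegaSqrtBranch Q) (√(1 - δ / omegaTheta Q))⁻¹ δ := by
  have hθ := (omegaTheta_pos hQ).ne'
  have hu := one_sub_div_omegaTheta_pos hQ hδ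
  have hsqrt := (Real.sqrt_pos.mpr hu).ne'
  have hinner := hasDerivAt_one_sub_div (omegaTheta Q) δ
  refine HasDerivAt.congr_deriv (f := omegaSqrtBranch Q)
    ((((Real.hasDerivAt_sqrt hu.ne').comp δ hinner).const_sub 1).const_mul (2 * omegaTheta Q)) ?_
  field_simp

lemma hasDerivAt_omegaLinearBranch (hQ : 2 < Q) (δ : ℝ) :
    HasDerivAt (omegaLinearBranch Q) ((Q - 1) / (Q - 2)) δ := by
  have h0 : Q ≠ 0 := by positivity
  have h1 : Q - 1 ≠ 0 := by linarith
  have h2 : Q - 2 ≠ 0 := by linarith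
  have hinner := hasDerivAt_one_sub_div (omegaTheta Q) δ
  refine HasDerivAt.congr_deriv (f := omegaLinearBranch Q)
    (((hinner.mul_const ((Q - 1) ^ 2)).div_const (Q * (Q - 2))).const_sub 1) ?_
  unfold omegaTheta
  field_simp

lemma omegaSqrtBranch_omegaKink (hQ : 2 < Q) :
    omegaSqrtBranch Q (omegaKink Q) = omegaLinearBranch Q (omegaKink Q) := by
  have h0 : Q ≠ 0 := by positivity
  have h1 : Q - 1 ≠ 0 := by linarith
  have h2 : Q - 2 ≠ 0 := by linarith
  rw [omegaSqrtBranch, omegaLinearBranch, sqrt_one_sub_omegaKink_div_omegaTheta hQ,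
    one_sub_omegaKink_div_omegaTheta (by linarith)]
  unfold omegaTheta
  field_simp
  ring

lemma continuous_omegaMaxReal (hQ : 2 < Q) : Continuous (omegaMaxReal Q) := by
  refine Continuous.if_le ?_ ?_ continuous_id continuous_const ?_
  · unfold omegaSqrtBranch; fun_prop
  · unfold omegaLinearBranch; fun_prop
  · rintro x rfl
    exact omegaSqrtBranch_omegaKink hQ

lemma hasDerivAt_omegaMaxReal (hQ : 2 < Q) {δ : ℝ} (hδ : δ < omegaTheta Q) :
    HasDerivAt (omegaMaxReal Q) (omegaMaxDeriv Q δ) δ := by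
  have hQ1 : 1 < Q := by linarith
  have hslope : (Q - 1) / (Q - 2) = (√(1 - omegaKink Q / omegaTheta Q))⁻¹ := by
    rw [sqrt_one_sub_omegaKink_div_omegaTheta hQ, inv_div]
  have hsqrt_pos := Real.sqrt_pos.mpr (one_sub_div_omegaTheta_pos hQ1 hδ)
  have hsqrt_kink_pos :=
    Real.sqrt_pos.mpr (one_sub_div_omegaTheta_pos hQ1 (omegaKink_lt_omegaTheta hQ))
  refine hasDerivAt_ite_le (omegaSqrtBranch_omegaKink hQ) (fun hle => ?_) (fun hge => ?_)
  · rw [omegaMaxDeriv, min_eq_left (hslope ▸ inv_anti₀ hsqrt_kink_pos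
      (antitone_sqrt_one_sub_div_omegaTheta hQ1 hle))]
    exact hasDerivAt_omegaSqrtBranch hQ1 hδ
  · rw [omegaMaxDeriv, min_eq_right (hslope ▸ inv_anti₀ hsqrt_pos
      (antitone_sqrt_one_sub_div_omegaTheta hQ1 hge))]
    exact hasDerivAt_omegaLinearBranch hQ δ

lemma omegaMaxDeriv_pos (hQ : 2 < Q) {δ : ℝ} (hδ : δ < omegaTheta Q) : 0 < omegaMaxDeriv Q δ :=
  lt_min (inv_pos.mpr (Real.sqrt_pos.mpr (one_sub_div_omegaTheta_pos (by linarith) hδ)))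
    (div_pos (by linarith) (by linarith))

lemma monotoneOn_omegaMaxDeriv (hQ : 1 < Q) : MonotoneOn (omegaMaxDeriv Q) (Iio (omegaTheta Q)) :=
  fun _ _ _ hy hxy => min_le_min_right _ <| inv_anti₀
    (Real.sqrt_pos.mpr (one_sub_div_omegaTheta_pos hQ hy))
    (antitone_sqrt_one_sub_div_omegaTheta hQ hxy)

lemma continuousOn_omegaMaxDeriv (hQ : 1 < Q) :
    ContinuousOn (omegaMaxDeriv Q) (Iio (omegaTheta Q)) := by
  refine ContinuousOn.inf (ContinuousOn.inv₀ (by fun_prop) fun x hx => ?_) continuousOn_const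
  exact (Real.sqrt_pos.mpr (one_sub_div_omegaTheta_pos hQ hx)).ne'

end

theorem stmt14 (q : ℕ) (hq : 3 ≤ q) :
    StrictMonoOn (omegaMax q) (Set.Icc (0 : ℝ) (1 - 1 / (q : ℝ))) ∧
    ContDiffOn ℝ 1 (omegaMax q) (Set.Ioo (0 : ℝ) (1 - 1 / (q : ℝ))) ∧
    ConvexOn ℝ (Set.Icc (0 : ℝ) (1 - 1 / (q : ℝ))) (omegaMax q) := by
  have hQ : (2 : ℝ) < q := by exact_mod_cast hq
  have hQ1 : (1 : ℝ) < q := by linarith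
  rw [omegaMax_eq_omegaMaxReal]
  exact strictMonoOn_contDiffOn_convexOn_of_hasDerivAt
    (continuous_omegaMaxReal hQ).continuousOn
    (fun δ hδ => hasDerivAt_omegaMaxReal hQ hδ.2) (fun δ hδ => omegaMaxDeriv_pos hQ hδ.2)
    ((continuousOn_omegaMaxDeriv hQ1).mono Ioo_subset_Iio_self)
    ((monotoneOn_omegaMaxDeriv hQ1).mono Ioo_subset_Iio_self)
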